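/- Let A be a prime noetherian ring and x a nonzero, non-unit, normal element of A such that xA is a completely prime ideal. If the localisation A_x at the powers of x is a noetherian unique factorisation domain, then so is A. -/

import Mathlib

/-- A ring is prime if `aRb = 0` implies `a = 0` or `b = 0`. -/
def IsPrimeRing (A : Type*) [Ring A] : Prop :=
  ∀ a b : A, (∀ r : A, a * r * b = 0) → a = 0 ∨ b = 0

/-- An element `x` is normal if `xA = Ax`. -/
def IsNormalElem {A : Type*} [Ring A] (x : A) : Prop :=
  {y | ∃ a, y = x * a} = {y | ∃ a, y = a * x}

/-- A two-sided ideal is prime. -/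
def TwoSidedIdeal.IsPrimeTS {A : Type*} [Ring A] (P : TwoSidedIdeal A) : Prop :=
  P ≠ ⊤ ∧ ∀ a b : A, (∀ r : A, a * r * b ∈ P) → a ∈ P ∨ b ∈ P

/-- A two-sided ideal is completely prime (the quotient is a domain). -/
def TwoSidedIdeal.IsCompletelyPrime {A : Type*} [Ring A] (P : TwoSidedIdeal A) : Prop :=
  P ≠ ⊤ ∧ ∀ a b : A, a * b ∈ P → a ∈ P ∨ b ∈ P

/-- A two-sided ideal is principal if it is generated by a normal element:
`I = xA = Ax` for some normal `x`. -/
def TwoSidedIdeal.IsPrincipalNormal {A : Type*} [Ring A] (I : TwoSidedIdeal A) : Prop :=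
  ∃ x : A, IsNormalElem x ∧ (∀ y, y ∈ I ↔ ∃ a, y = x * a)

/-- A noetherian unique factorisation ring: a prime noetherian ring in which every
nonzero prime ideal contains a nonzero principal prime ideal. -/
def IsNoethUFR (A : Type*) [Ring A] : Prop :=
  IsPrimeRing A ∧ IsNoetherianRing A ∧
    ∀ P : TwoSidedIdeal A, P.IsPrimeTS → P ≠ ⊥ →
      ∃ Q : TwoSidedIdeal A, Q ≠ ⊥ ∧ Q.IsPrimeTS ∧ Q.IsPrincipalNormal ∧ Q ≤ P

/-- A prime ideal of height one. -/
def TwoSidedIdeal.IsHeightOnePrime {A : Type*} [Ring A] (P : TwoSidedIdeal A) : Prop :=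
  P.IsPrimeTS ∧ P ≠ ⊥ ∧ ∀ Q : TwoSidedIdeal A, Q.IsPrimeTS → Q < P → Q = ⊥

/-- A noetherian unique factorisation domain: a noetherian UFR which is a domain and in
which every height one prime ideal is completely prime. -/
def IsNoethUFD (A : Type*) [Ring A] : Prop :=
  IsNoethUFR A ∧ IsDomain A ∧
    ∀ P : TwoSidedIdeal A, P.IsHeightOnePrime → P.IsCompletelyPrime

/-!
Since `A` is prime, the normal element `x` is regular, so `a * x = x * σ a` for a ring
automorphism `σ`, `A` embeds in `A_x` (hence is a domain) and every element of `A_x` is a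
fraction with a power of `x` as denominator on either side. Primes `P ∌ x` of `A` extend to
primes of `A_x` and are recovered by contraction; contractions of primes of `A_x` are prime
because, `A` being noetherian, an ideal carried into itself by `σ⁻¹` is `σ`-stable.

If `x ∈ P`, then `P ⊇ xA`, a nonzero principal prime, and `P = xA` when `P` has height one.
If `x ∉ P`, the extension of `P` contains a principal prime `yA_x`. Noetherianity lets us take
`y = q` with `q ∈ A` not divisible by `x`, and since `xA` is completely prime, cancelling powers
of `x` shows that `yA_x` contracts to `qA = Aq`. For `P` of height one the extension is again of
height one, hence completely prime, and so is its contraction `P`.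
-/

section NormalElement

variable {R : Type*} [Ring R] {x : R}

theorem IsNormalElem.exists_mul_eq_mul_left (hx : IsNormalElem x) (a : R) :
    ∃ b, x * a = b * x :=
  Set.ext_iff.mp hx (x * a) |>.mp ⟨a, rfl⟩

theorem IsNormalElem.exists_mul_eq_mul_right (hx : IsNormalElem x) (a : R) :
    ∃ b, a * x = x * b :=
  Set.ext_iff.mp hx (a * x) |>.mpr ⟨a, rfl⟩

theorem IsPrimeRing.isRegular_of_isNormalElem (hR : IsPrimeRing R) (hx : IsNormalElem x)
    (hx0 : x ≠ 0) : IsRegular x := by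
  refine ⟨isLeftRegular_iff_right_eq_zero_of_mul.mpr fun a ha => ?_,
    isRightRegular_iff_left_eq_zero_of_mul.mpr fun a ha => ?_⟩
  · refine (hR x a fun r => ?_).resolve_left hx0
    obtain ⟨b, hb⟩ := hx.exists_mul_eq_mul_left r
    rw [hb, mul_assoc, ha, mul_zero]
  · refine (hR a x fun r => ?_).resolve_right hx0
    obtain ⟨b, hb⟩ := hx.exists_mul_eq_mul_right r
    rw [mul_assoc, hb, ← mul_assoc, ha, zero_mul]

theorem IsNormalElem.exists_ringAut (hx : IsNormalElem x) (hreg : IsRegular x) :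
    ∃ σ : RingAut R, ∀ a, a * x = x * σ a := by
  choose σ hσ using hx.exists_mul_eq_mul_right
  choose τ hτ using hx.exists_mul_eq_mul_left
  refine ⟨{ toFun := σ, invFun := τ, left_inv := ?_, right_inv := ?_, map_mul' := ?_,
             map_add' := ?_ }, hσ⟩
  · exact fun a => hreg.right (show τ (σ a) * x = a * x by rw [← hτ, ← hσ])
  · exact fun a => hreg.left (show x * σ (τ a) = x * a by rw [← hσ, ← hτ])
  · exact fun a b => hreg.left (show x * σ (a * b) = x * (σ a * σ b) by
      rw [← hσ, mul_assoc, hσ, ← mul_assoc, hσ, mul_assoc])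
  · exact fun a b => hreg.left (show x * σ (a + b) = x * (σ a + σ b) by
      rw [← hσ, mul_add, add_mul, hσ, hσ])

noncomputable def IsNormalElem.conj (hx : IsNormalElem x) (hreg : IsRegular x) : RingAut R :=
  (hx.exists_ringAut hreg).choose

theorem IsNormalElem.mul_eq_mul_conj (hx : IsNormalElem x) (hreg : IsRegular x) (a : R) :
    a * x = x * hx.conj hreg a :=
  (hx.exists_ringAut hreg).choose_spec a

theorem IsNormalElem.mul_eq_conj_symm_mul (hx : IsNormalElem x) (hreg : IsRegular x) (a : R) :
    x * a = (hx.conj hreg).symm a * x := by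
  rw [hx.mul_eq_mul_conj hreg, RingEquiv.apply_symm_apply]

theorem IsNormalElem.mul_pow_eq_pow_mul_conj_pow (hx : IsNormalElem x) (hreg : IsRegular x)
    (n : ℕ) (a : R) : a * x ^ n = x ^ n * (hx.conj hreg ^ n) a := by
  induction n generalizing a with
  | zero => simp
  | succ n ih =>
    rw [pow_succ, ← mul_assoc, ih, mul_assoc, hx.mul_eq_mul_conj hreg, ← mul_assoc,
      pow_succ', RingAut.mul_apply]

theorem RingAut.pow_apply_mem_iff {S : Type*} [SetLike S R] {s : S} (σ : RingAut R)
    (hσ : ∀ a, σ a ∈ s ↔ a ∈ s) (n : ℕ) (a : R) : (σ ^ n) a ∈ s ↔ a ∈ s := by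
  induction n with
  | zero => rfl
  | succ n ih => rw [pow_succ', RingAut.mul_apply, hσ, ih]

end NormalElement

namespace TwoSidedIdeal

variable {R S : Type*} [Ring R] [Ring S] {I P : TwoSidedIdeal R} {x y u z : R}

def IsNormalGenerator (I : TwoSidedIdeal R) (y : R) : Prop :=
  (∀ z, z ∈ I ↔ ∃ a, z = y * a) ∧ ∀ z, z ∈ I ↔ ∃ a, z = a * y

theorem isPrincipalNormal_iff : I.IsPrincipalNormal ↔ ∃ y, I.IsNormalGenerator y := by
  constructor
  · rintro ⟨y, hy, hI⟩
    exact ⟨y, hI, fun z => (hI z).trans (Set.ext_iff.mp hy z)⟩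
  · rintro ⟨y, hr, hl⟩
    exact ⟨y, Set.ext fun z => (hr z).symm.trans (hl z), hr⟩

theorem IsNormalGenerator.mem (h : I.IsNormalGenerator y) : y ∈ I :=
  (h.1 y).mpr ⟨1, (mul_one y).symm⟩

theorem IsNormalGenerator.ne_zero (h : I.IsNormalGenerator y) (hI : I ≠ ⊥) : y ≠ 0 := by
  rintro rfl
  refine hI (eq_bot_iff.mpr fun z hz => ?_)
  obtain ⟨a, rfl⟩ := (h.1 z).mp hz
  exact (mem_bot R).mpr (zero_mul a)

theorem IsNormalGenerator.unit_mul (h : I.IsNormalGenerator y) (hu : IsUnit u) :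
    I.IsNormalGenerator (u * y) := by
  obtain ⟨u, rfl⟩ := hu
  refine ⟨fun z => ⟨fun hz => ?_, ?_⟩, fun z => ⟨fun hz => ?_, ?_⟩⟩
  · obtain ⟨a, ha⟩ := (h.1 _).mp (I.mul_mem_left (↑u⁻¹) z hz)
    exact ⟨a, by rw [mul_assoc, ← ha, Units.mul_inv_cancel_left]⟩
  · rintro ⟨a, rfl⟩
    exact I.mul_mem_right _ a (I.mul_mem_left u y h.mem)
  · obtain ⟨a, rfl⟩ := (h.2 z).mp hz
    exact ⟨a * ↑u⁻¹, by rw [mul_assoc, Units.inv_mul_cancel_left]⟩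
  · rintro ⟨a, rfl⟩
    exact I.mul_mem_left a _ (I.mul_mem_left u y h.mem)

theorem IsNormalGenerator.mul_unit (h : I.IsNormalGenerator y) (hu : IsUnit u) :
    I.IsNormalGenerator (y * u) := by
  obtain ⟨u, rfl⟩ := hu
  refine ⟨fun z => ⟨fun hz => ?_, ?_⟩, fun z => ⟨fun hz => ?_, ?_⟩⟩
  · obtain ⟨a, rfl⟩ := (h.1 z).mp hz
    exact ⟨↑u⁻¹ * a, by rw [mul_assoc, Units.mul_inv_cancel_left]⟩
  · rintro ⟨a, rfl⟩
    exact I.mul_mem_right _ a (I.mul_mem_right y u h.mem)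
  · obtain ⟨a, ha⟩ := (h.2 _).mp (I.mul_mem_right z (↑u⁻¹) hz)
    exact ⟨a, by rw [← mul_assoc, ← ha, Units.inv_mul_cancel_right]⟩
  · rintro ⟨a, rfl⟩
    exact I.mul_mem_left a _ (I.mul_mem_right y u h.mem)

theorem IsNormalGenerator.of_unit_mul (h : I.IsNormalGenerator (u * y)) (hu : IsUnit u) :
    I.IsNormalGenerator y := by
  simpa [← mul_assoc] using h.unit_mul hu.unit⁻¹.isUnit

theorem mul_unit_mem_iff_mem (I : TwoSidedIdeal R) (hu : IsUnit u) : z * u ∈ I ↔ z ∈ I := by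
  obtain ⟨u, rfl⟩ := hu
  refine ⟨fun h => ?_, fun h => I.mul_mem_right z u h⟩
  simpa using I.mul_mem_right _ (↑u⁻¹) h

theorem ne_bot_iff : I ≠ ⊥ ↔ ∃ z ∈ I, z ≠ 0 := by
  simp only [ne_eq, eq_bot_iff, SetLike.le_def, mem_bot, not_forall, exists_prop]

theorem span_singleton_ne_bot (hx : x ≠ 0) : span {x} ≠ ⊥ :=
  ne_bot_iff.mpr ⟨x, subset_span rfl, hx⟩

theorem IsCompletelyPrime.isPrimeTS (hP : P.IsCompletelyPrime) : P.IsPrimeTS :=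
  ⟨hP.1, fun a b h => hP.2 a b (by simpa using h 1)⟩

theorem IsCompletelyPrime.comap (f : S →+* R) (hP : P.IsCompletelyPrime) :
    (P.comap f).IsCompletelyPrime := by
  refine ⟨fun h => hP.1 ?_, fun a b h => ?_⟩
  · rw [← one_mem_iff, ← map_one f, ← mem_comap, h]
    trivial
  · simp only [mem_comap, map_mul] at h ⊢
    exact hP.2 _ _ h

theorem map_le_iff_le_comap (f : S →+* R) {J : TwoSidedIdeal R} {P : TwoSidedIdeal S} :
    P.map f ≤ J ↔ P ≤ J.comap f := by
  rw [map, span_le]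
  exact ⟨fun h p hp => (mem_comap f).mpr (h ⟨p, hp, rfl⟩),
    fun h _ ⟨p, hp, hfp⟩ => hfp ▸ (mem_comap f).mp (h hp)⟩

theorem mem_map_of_mem (f : S →+* R) {P : TwoSidedIdeal S} {p : S} (hp : p ∈ P) :
    f p ∈ P.map f :=
  subset_span ⟨p, hp, rfl⟩

theorem _root_.IsNormalElem.isNormalGenerator_span (hx : IsNormalElem x) :
    (span {x}).IsNormalGenerator x := by
  suffices h : ∀ z, z ∈ span {x} ↔ ∃ a, z = x * a from
    ⟨h, fun z => (h z).trans (Set.ext_iff.mp hx z)⟩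
  intro z
  refine ⟨fun hz => ?_, fun ⟨a, ha⟩ => ha ▸ mul_mem_right _ x a (subset_span rfl)⟩
  let xR : TwoSidedIdeal R := .mk' {z | ∃ a, z = x * a} ⟨0, (mul_zero x).symm⟩
    (fun ⟨a, ha⟩ ⟨b, hb⟩ => ⟨a + b, by rw [ha, hb, mul_add]⟩)
    (fun ⟨a, ha⟩ => ⟨-a, by rw [ha, mul_neg]⟩)
    (fun {r _} ⟨a, ha⟩ => by
      obtain ⟨b, hb⟩ := hx.exists_mul_eq_mul_right r
      exact ⟨b * a, by rw [ha, ← mul_assoc, hb, mul_assoc]⟩)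
    (fun {_ r} ⟨a, ha⟩ => ⟨a * r, by rw [ha, mul_assoc]⟩)
  have hle : span {x} ≤ xR :=
    span_le.mpr <| Set.singleton_subset_iff.mpr <| (mem_mk' ..).mpr ⟨1, (mul_one x).symm⟩
  simpa only [xR, mem_mk', Set.mem_ofPred_eq] using hle hz

end TwoSidedIdeal

theorem Ideal.comap_eq_self_of_le_comap {R : Type*} [Semiring R] [IsNoetherianRing R]
    (σ : R ≃+* R) {I : Ideal R} (h : I ≤ I.comap σ) : I.comap σ = I := by
  have hmono : Monotone (Ideal.comap σ) := fun _ _ => Ideal.comap_mono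
  obtain ⟨N, hN⟩ := monotone_stabilizes_iff_noetherian.mpr ‹_›
    ⟨fun n => (Ideal.comap σ)^[n] I, hmono.monotone_iterate_of_le_map h⟩
  have hinj := (Ideal.comap_injective_of_surjective σ σ.surjective).iterate N
  have hstab : (Ideal.comap σ)^[N] I = (Ideal.comap σ)^[N] (I.comap σ) := hN (N + 1) N.le_succ
  exact (hinj hstab).symm

theorem exists_eq_pow_mul_and_not_exists_eq_mul {R : Type*} [Ring R] [IsNoetherianRing R]
    [IsDomain R] {x g : R} (hx : ¬IsUnit x) (hg : g ≠ 0) :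
    ∃ n q, g = x ^ n * q ∧ ¬∃ t, q = x * t := by
  obtain ⟨_, ⟨n, q, hgq, rfl⟩, hmax⟩ := set_has_maximal_iff_noetherian.mpr ‹_›
    {I : Ideal R | ∃ n q, g = x ^ n * q ∧ I = Ideal.span {q}} ⟨_, 0, g, by simp, rfl⟩
  refine ⟨n, q, hgq, fun ⟨t, ht⟩ => hx ?_⟩
  have hle : Ideal.span {q} ≤ Ideal.span {t} :=
    Ideal.span_le.mpr <| by rintro _ rfl; exact Ideal.mem_span_singleton'.mpr ⟨x, ht.symm⟩
  have hmem : t ∈ Ideal.span {q} := by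
    by_contra hnot
    refine hmax _ ⟨n + 1, t, by rw [hgq, ht, pow_succ, mul_assoc], rfl⟩ (lt_of_le_of_ne hle ?_)
    exact fun heq => hnot (heq ▸ Ideal.mem_span_singleton_self t)
  obtain ⟨d, hd⟩ := Ideal.mem_span_singleton'.mp hmem
  have ht0 : t ≠ 0 := by rintro rfl; simp_all
  refine IsUnit.of_mul_eq_one_right d (mul_right_cancel₀ ht0 ?_)
  rw [one_mul, mul_assoc, ← ht, hd]

section PrimeIdeals

variable {R : Type*} [Ring R] {P : TwoSidedIdeal R} {x q : R}

open TwoSidedIdeal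

theorem TwoSidedIdeal.IsPrimeTS.conj_mem_iff (hP : P.IsPrimeTS) (hx : IsNormalElem x)
    (hreg : IsRegular x) (hxP : x ∉ P) (p : R) : hx.conj hreg p ∈ P ↔ p ∈ P := by
  refine ⟨fun h => (hP.2 p x fun r => ?_).resolve_right hxP,
    fun h => (hP.2 x _ fun r => ?_).resolve_left hxP⟩
  · rw [mul_assoc, hx.mul_eq_mul_conj hreg, ← mul_assoc, hx.mul_eq_mul_conj hreg]
    exact P.mul_mem_right _ _ (P.mul_mem_left _ _ h)
  · rw [hx.mul_eq_conj_symm_mul hreg, mul_assoc, ← hx.mul_eq_mul_conj hreg]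
    exact P.mul_mem_left _ _ (P.mul_mem_right _ _ h)

theorem TwoSidedIdeal.IsPrimeTS.mem_of_mul_pow_mem (hP : P.IsPrimeTS) (hx : IsNormalElem x)
    (hxP : x ∉ P) (n : ℕ) {c : R} (h : c * x ^ n ∈ P) : c ∈ P := by
  induction n generalizing c with
  | zero => simpa using h
  | succ n ih =>
    refine ih ((hP.2 _ x fun r => ?_).resolve_right hxP)
    obtain ⟨r', hr'⟩ := hx.exists_mul_eq_mul_right r
    rw [mul_assoc, hr', ← mul_assoc, mul_assoc c, ← pow_succ]
    exact P.mul_mem_right _ _ h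

theorem exists_eq_mul_pow_of_mul_eq_mul_pow (hx : IsNormalElem x) (hreg : IsRegular x)
    (hxcp : (span {x}).IsCompletelyPrime) (hq : q ∉ span {x}) (n : ℕ) {c a : R}
    (h : q * c = a * x ^ n) : ∃ d, c = d * x ^ n := by
  induction n generalizing c a with
  | zero => exact ⟨c, by simp⟩
  | succ n ih =>
    have hgen := hx.isNormalGenerator_span
    have hc : c ∈ span {x} := (hxcp.2 q c <| (hgen.2 _).mpr
      ⟨a * x ^ n, by rw [h, pow_succ, mul_assoc]⟩).resolve_left hq
    obtain ⟨c', rfl⟩ := (hgen.2 c).mp hc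
    obtain ⟨d, rfl⟩ := ih (hreg.right (show q * c' * x = a * x ^ n * x by
      rw [mul_assoc, h, pow_succ, mul_assoc]))
    exact ⟨d, by rw [pow_succ, mul_assoc]⟩

theorem exists_eq_pow_mul_of_mul_eq_pow_mul (hx : IsNormalElem x) (hreg : IsRegular x)
    (hxcp : (span {x}).IsCompletelyPrime) (hq : q ∉ span {x}) (n : ℕ) {c a : R}
    (h : c * q = x ^ n * a) : ∃ d, c = x ^ n * d := by
  induction n generalizing c a with
  | zero => exact ⟨c, by simp⟩
  | succ n ih =>
    have hgen := hx.isNormalGenerator_span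
    have hc : c ∈ span {x} := (hxcp.2 c q <| (hgen.1 _).mpr
      ⟨x ^ n * a, by rw [h, pow_succ', mul_assoc]⟩).resolve_right hq
    obtain ⟨c', rfl⟩ := (hgen.1 c).mp hc
    obtain ⟨d, rfl⟩ := ih (hreg.left (show x * (c' * q) = x * (x ^ n * a) by
      rw [← mul_assoc, h, pow_succ', mul_assoc]))
    exact ⟨d, by rw [pow_succ', mul_assoc]⟩

end PrimeIdeals

/-- `B` is `A[x⁻¹]`, with `A` embedded via `f` (e.g. the Ore localisation at the powers of a
regular `x`). -/
structure IsLeftLocalizationAway {A B : Type*} [Ring A] [Ring B] (x : A) (f : A →+* B) :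
    Prop where
  isUnit : IsUnit (f x)
  exists_pow_mul_eq (z : B) : ∃ n c, f x ^ n * z = f c
  injective : Function.Injective f

namespace IsLeftLocalizationAway

open TwoSidedIdeal

variable {A B : Type*} [Ring A] [Ring B] {x : A} {f : A →+* B} {P : TwoSidedIdeal A}

theorem isRegular (hf : IsLeftLocalizationAway x f) : IsRegular x :=
  ⟨fun a b h => hf.injective <| hf.isUnit.mul_left_cancel <| by
      simpa only [map_mul] using congrArg f h,
    fun a b h => hf.injective <| hf.isUnit.mul_right_cancel <| by
      simpa only [map_mul] using congrArg f h⟩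

theorem map_mul_pow (hf : IsLeftLocalizationAway x f) (hx : IsNormalElem x) (n : ℕ) (c : A) :
    f c * f x ^ n = f x ^ n * f ((hx.conj hf.isRegular ^ n) c) := by
  rw [← map_pow, ← map_mul, hx.mul_pow_eq_pow_mul_conj_pow, map_mul]

theorem exists_mul_pow_eq (hf : IsLeftLocalizationAway x f) (hx : IsNormalElem x) (z : B) :
    ∃ n c, z * f x ^ n = f c := by
  obtain ⟨n, c, hc⟩ := hf.exists_pow_mul_eq z
  refine ⟨n, (hx.conj hf.isRegular ^ n) c, (hf.isUnit.pow n).mul_left_cancel ?_⟩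
  rw [← mul_assoc, hc, hf.map_mul_pow hx]

theorem comap_ne_bot (hf : IsLeftLocalizationAway x f) {J : TwoSidedIdeal B} (hJ : J ≠ ⊥) :
    J.comap f ≠ ⊥ := by
  obtain ⟨z, hzJ, hz0⟩ := ne_bot_iff.mp hJ
  obtain ⟨n, c, hc⟩ := hf.exists_pow_mul_eq z
  refine ne_bot_iff.mpr ⟨c, (mem_comap f).mpr (hc ▸ J.mul_mem_left _ _ hzJ), ?_⟩
  rintro rfl
  exact hz0 ((hf.isUnit.pow n).mul_right_eq_zero.mp (by rw [hc, map_zero]))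

theorem isPrimeTS_comap [IsNoetherianRing A] (hf : IsLeftLocalizationAway x f)
    (hx : IsNormalElem x) {J : TwoSidedIdeal B} (hJ : J.IsPrimeTS) : (J.comap f).IsPrimeTS := by
  set σ := hx.conj hf.isRegular
  refine ⟨fun h => hJ.1 ?_, fun a b hab => ?_⟩
  · rw [← one_mem_iff, ← map_one f, ← mem_comap, h]
    trivial
  let D : Ideal A :=
    { carrier := {t | ∀ s, f (a * s * t) ∈ J}
      add_mem' := fun ht ht' s => by rw [mul_add, map_add]; exact J.add_mem (ht s) (ht' s)
      zero_mem' := fun s => by rw [mul_zero, map_zero]; exact J.zero_mem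
      smul_mem' := fun r t ht s => by rw [smul_eq_mul, ← mul_assoc, mul_assoc a]; exact ht _ }
  -- `a * s * σ⁻¹ t * x = a * (s * x) * t`
  have hD : D ≤ D.comap σ.symm := fun t ht s => by
    rw [← J.mul_unit_mem_iff_mem hf.isUnit, ← map_mul, mul_assoc, ← hx.mul_eq_conj_symm_mul,
      ← mul_assoc, mul_assoc a]
    exact ht _
  have hσD (t : A) : σ t ∈ D ↔ t ∈ D := by
    conv_rhs => rw [← σ.symm_apply_apply t]
    exact (SetLike.ext_iff.mp (Ideal.comap_eq_self_of_le_comap σ.symm hD) (σ t)).symm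
  have hbD (n : ℕ) : (σ ^ n) b ∈ D :=
    (σ.pow_apply_mem_iff hσD n b).mpr fun s => (mem_comap f).mp (hab s)
  refine (hJ.2 (f a) (f b) fun z => ?_).imp (mem_comap f).mpr (mem_comap f).mpr
  obtain ⟨n, c, hc⟩ := hf.exists_mul_pow_eq hx z
  rw [← J.mul_unit_mem_iff_mem (hf.isUnit.pow n), mul_assoc _ (f b), hf.map_mul_pow hx,
    ← mul_assoc, mul_assoc (f a), hc, ← map_mul, ← map_mul]
  exact hbD n c

theorem mem_map_iff (hf : IsLeftLocalizationAway x f) (hx : IsNormalElem x) (hP : P.IsPrimeTS)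
    (hxP : x ∉ P) {z : B} : z ∈ P.map f ↔ ∃ n, ∃ p ∈ P, z * f x ^ n = f p := by
  refine ⟨fun hz => ?_, fun ⟨n, p, hp, h⟩ => ?_⟩
  · set σ := hx.conj hf.isRegular
    have hσP (n : ℕ) (p : A) : (σ ^ n) p ∈ P ↔ p ∈ P :=
      σ.pow_apply_mem_iff (hP.conj_mem_iff hx hf.isRegular hxP) n p
    let E : TwoSidedIdeal B := .mk' {z | ∃ n, ∃ p ∈ P, z * f x ^ n = f p}
      ⟨0, 0, P.zero_mem, by rw [zero_mul, map_zero]⟩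
      (fun ⟨n, p, hp, hzp⟩ ⟨m, q, hq, hwq⟩ => ⟨n + m, p * x ^ m + q * x ^ n,
        P.add_mem (P.mul_mem_right _ _ hp) (P.mul_mem_right _ _ hq), by
          rw [add_mul, map_add, map_mul, map_mul, map_pow, map_pow, pow_add, ← mul_assoc, hzp,
            pow_mul_comm, ← mul_assoc, hwq]⟩)
      (fun ⟨n, p, hp, hzp⟩ => ⟨n, -p, P.neg_mem hp, by rw [neg_mul, hzp, map_neg]⟩)
      (fun {w _} ⟨n, p, hp, hzp⟩ => by
        obtain ⟨m, c, hc⟩ := hf.exists_mul_pow_eq hx w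
        refine ⟨n + m, c * (σ ^ m) p, P.mul_mem_left _ _ ((hσP m p).mpr hp), ?_⟩
        rw [pow_add, ← mul_assoc, mul_assoc w, hzp, mul_assoc, hf.map_mul_pow hx, ← mul_assoc,
          hc, map_mul])
      (fun {_ w} ⟨n, p, hp, hzp⟩ => by
        obtain ⟨m, c, hc⟩ := hf.exists_mul_pow_eq hx w
        refine ⟨m + n, p * (σ ^ n) c, P.mul_mem_right _ _ hp, ?_⟩
        rw [pow_add, ← mul_assoc, mul_assoc _ w, hc, mul_assoc, hf.map_mul_pow hx, ← mul_assoc,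
          hzp, map_mul])
    have hle : P.map f ≤ E := (map_le_iff_le_comap f).mpr fun p hp =>
      (mem_comap f).mpr ((mem_mk' ..).mpr ⟨0, p, hp, by rw [pow_zero, mul_one]⟩)
    simpa only [E, mem_mk', Set.mem_ofPred_eq] using hle hz
  · rw [← mul_unit_mem_iff_mem _ (hf.isUnit.pow n), h]
    exact mem_map_of_mem f hp

theorem mem_of_mem_map_of_mul_pow_eq (hf : IsLeftLocalizationAway x f) (hx : IsNormalElem x)
    (hP : P.IsPrimeTS) (hxP : x ∉ P) {z : B} (hz : z ∈ P.map f) {m : ℕ} {c : A}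
    (h : z * f x ^ m = f c) : c ∈ P := by
  obtain ⟨n, p, hp, hzp⟩ := (hf.mem_map_iff hx hP hxP).mp hz
  have hcp : c * x ^ n = p * x ^ m := hf.injective <| by
    rw [map_mul, map_mul, map_pow, map_pow, ← h, ← hzp, mul_assoc, mul_assoc, pow_mul_comm]
  exact hP.mem_of_mul_pow_mem hx hxP n (hcp ▸ P.mul_mem_right _ _ hp)

theorem comap_map (hf : IsLeftLocalizationAway x f) (hx : IsNormalElem x) (hP : P.IsPrimeTS)
    (hxP : x ∉ P) : (P.map f).comap f = P := by
  ext a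
  refine ⟨fun ha => hf.mem_of_mem_map_of_mul_pow_eq hx hP hxP ((mem_comap f).mp ha) (m := 0)
    (by rw [pow_zero, mul_one]), fun ha => (mem_comap f).mpr (mem_map_of_mem f ha)⟩

theorem isPrimeTS_map (hf : IsLeftLocalizationAway x f) (hx : IsNormalElem x) (hP : P.IsPrimeTS)
    (hxP : x ∉ P) : (P.map f).IsPrimeTS := by
  refine ⟨fun h => hxP ?_, fun α β hαβ => ?_⟩
  · exact hf.mem_of_mem_map_of_mul_pow_eq hx hP hxP (h ▸ trivial : (1 : B) ∈ P.map f) (m := 1)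
      (by rw [one_mul, pow_one])
  obtain ⟨n, a, ha⟩ := hf.exists_mul_pow_eq hx α
  obtain ⟨m, b, hb⟩ := hf.exists_mul_pow_eq hx β
  have hab (r : A) : a * r * b ∈ P := by
    refine hf.mem_of_mem_map_of_mul_pow_eq hx hP hxP (hαβ (f x ^ n * f r)) (m := m) ?_
    rw [mul_assoc, hb, ← mul_assoc, ha, ← map_mul, ← map_mul]
  exact (hP.2 a b hab).imp (fun h => (hf.mem_map_iff hx hP hxP).mpr ⟨n, a, h, ha⟩)
    (fun h => (hf.mem_map_iff hx hP hxP).mpr ⟨m, b, h, hb⟩)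

theorem map_ne_bot (hf : IsLeftLocalizationAway x f) (hP : P ≠ ⊥) : P.map f ≠ ⊥ := by
  obtain ⟨p, hp, hp0⟩ := ne_bot_iff.mp hP
  exact ne_bot_iff.mpr ⟨f p, mem_map_of_mem f hp,
    (map_ne_zero_iff f hf.injective).mpr hp0⟩

theorem isNormalGenerator_comap (hf : IsLeftLocalizationAway x f) (hx : IsNormalElem x)
    (hxcp : (span {x}).IsCompletelyPrime) {Q : TwoSidedIdeal B} {q : A} (hq : q ∉ span {x})
    (hQ : Q.IsNormalGenerator (f q)) : (Q.comap f).IsNormalGenerator q := by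
  have hreg := hf.isRegular
  refine ⟨fun z => ⟨fun hz => ?_, ?_⟩, fun z => ⟨fun hz => ?_, ?_⟩⟩
  · obtain ⟨w, hw⟩ := (hQ.1 _).mp ((mem_comap f).mp hz)
    obtain ⟨n, c, hc⟩ := hf.exists_mul_pow_eq hx w
    have h : q * c = z * x ^ n := hf.injective <| by
      rw [map_mul, map_mul, map_pow, hw, mul_assoc, hc]
    obtain ⟨d, rfl⟩ := exists_eq_mul_pow_of_mul_eq_mul_pow hx hreg hxcp hq n h
    exact ⟨d, (hreg.pow n).right (show z * x ^ n = q * d * x ^ n by rw [← h, mul_assoc])⟩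
  · rintro ⟨a, rfl⟩
    exact (mem_comap f).mpr (by rw [map_mul]; exact Q.mul_mem_right _ _ hQ.mem)
  · obtain ⟨w, hw⟩ := (hQ.2 _).mp ((mem_comap f).mp hz)
    obtain ⟨n, c, hc⟩ := hf.exists_pow_mul_eq w
    have h : c * q = x ^ n * z := hf.injective <| by
      rw [map_mul, map_mul, map_pow, hw, ← mul_assoc, hc]
    obtain ⟨d, rfl⟩ := exists_eq_pow_mul_of_mul_eq_pow_mul hx hreg hxcp hq n h
    exact ⟨d, (hreg.pow n).left (show x ^ n * z = x ^ n * (d * q) by rw [← h, mul_assoc])⟩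
  · rintro ⟨a, rfl⟩
    exact (mem_comap f).mpr (by rw [map_mul]; exact Q.mul_mem_left _ _ hQ.mem)

theorem isPrincipalNormal_comap [IsNoetherianRing A] [IsDomain A]
    (hf : IsLeftLocalizationAway x f) (hx : IsNormalElem x) (hxu : ¬IsUnit x)
    (hxcp : (span {x}).IsCompletelyPrime) {Q : TwoSidedIdeal B} (hQ : Q.IsPrincipalNormal)
    (hQ0 : Q ≠ ⊥) : (Q.comap f).IsPrincipalNormal := by
  obtain ⟨y, hy⟩ := isPrincipalNormal_iff.mp hQ
  obtain ⟨n, g, hg⟩ := hf.exists_mul_pow_eq hx y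
  have hgen : Q.IsNormalGenerator (f g) := hg ▸ hy.mul_unit (hf.isUnit.pow n)
  have hg0 : g ≠ 0 := fun h => hgen.ne_zero hQ0 (by rw [h, map_zero])
  obtain ⟨k, q, rfl, hq⟩ := exists_eq_pow_mul_and_not_exists_eq_mul hxu hg0
  rw [map_mul, map_pow] at hgen
  refine isPrincipalNormal_iff.mpr ⟨q, hf.isNormalGenerator_comap hx hxcp ?_ ?_⟩
  · exact fun h => hq ((hx.isNormalGenerator_span.1 q).mp h)
  · exact hgen.of_unit_mul (hf.isUnit.pow k)

theorem exists_principal_prime_le [IsNoetherianRing A] [IsDomain A]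
    (hf : IsLeftLocalizationAway x f) (hx0 : x ≠ 0) (hxu : ¬IsUnit x) (hx : IsNormalElem x)
    (hxcp : (span {x}).IsCompletelyPrime)
    (hB : ∀ P : TwoSidedIdeal B, P.IsPrimeTS → P ≠ ⊥ →
      ∃ Q : TwoSidedIdeal B, Q ≠ ⊥ ∧ Q.IsPrimeTS ∧ Q.IsPrincipalNormal ∧ Q ≤ P)
    (hP : P.IsPrimeTS) (hP0 : P ≠ ⊥) :
    ∃ Q : TwoSidedIdeal A, Q ≠ ⊥ ∧ Q.IsPrimeTS ∧ Q.IsPrincipalNormal ∧ Q ≤ P := by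
  by_cases hxP : x ∈ P
  · exact ⟨span {x}, span_singleton_ne_bot hx0, hxcp.isPrimeTS,
      isPrincipalNormal_iff.mpr ⟨x, hx.isNormalGenerator_span⟩,
      span_le.mpr (Set.singleton_subset_iff.mpr hxP)⟩
  obtain ⟨Q, hQ0, hQ, hQn, hQP⟩ := hB _ (hf.isPrimeTS_map hx hP hxP) (hf.map_ne_bot hP0)
  exact ⟨Q.comap f, hf.comap_ne_bot hQ0, hf.isPrimeTS_comap hx hQ,
    hf.isPrincipalNormal_comap hx hxu hxcp hQn hQ0,
    (comap_le_comap f hQP).trans (hf.comap_map hx hP hxP).le⟩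

theorem isCompletelyPrime_of_isHeightOnePrime [IsNoetherianRing A]
    (hf : IsLeftLocalizationAway x f) (hx0 : x ≠ 0) (hx : IsNormalElem x)
    (hxcp : (span {x}).IsCompletelyPrime)
    (hB : ∀ P : TwoSidedIdeal B, P.IsHeightOnePrime → P.IsCompletelyPrime)
    (hP : P.IsHeightOnePrime) : P.IsCompletelyPrime := by
  obtain ⟨hPp, hP0, hPmin⟩ := hP
  by_cases hxP : x ∈ P
  · have hle : span {x} ≤ P := span_le.mpr (Set.singleton_subset_iff.mpr hxP)
    rw [← hle.eq_of_not_lt fun hlt => span_singleton_ne_bot hx0 (hPmin _ hxcp.isPrimeTS hlt)]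
    exact hxcp
  have hE : (P.map f).IsHeightOnePrime := by
    refine ⟨hf.isPrimeTS_map hx hPp hxP, hf.map_ne_bot hP0, fun J hJ hJE => ?_⟩
    have hJP : J.comap f < P := by
      refine lt_of_le_of_ne ((comap_le_comap f hJE.le).trans (hf.comap_map hx hPp hxP).le)
        fun h => hJE.not_ge ((map_le_iff_le_comap f).mpr h.ge)
    by_contra hJ0
    exact hf.comap_ne_bot hJ0 (hPmin _ (hf.isPrimeTS_comap hx hJ) hJP)
  rw [← hf.comap_map hx hPp hxP]
  exact (hB _ hE).comap f

end IsLeftLocalizationAway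

open OreLocalization in
theorem isLeftLocalizationAway_numeratorRingHom {A : Type*} [Ring A] {x : A}
    [OreSet (Submonoid.powers x)] (hreg : IsRegular x) :
    IsLeftLocalizationAway x (numeratorRingHom : A →+* A[(Submonoid.powers x)⁻¹]) where
  isUnit := numerator_isUnit ⟨x, Submonoid.mem_powers x⟩
  exists_pow_mul_eq z := by
    induction z using OreLocalization.ind with
    | _ r s =>
      obtain ⟨n, hn⟩ := s.2
      refine ⟨n, r, ?_⟩
      rw [← map_pow, show x ^ n = s from hn]
      exact OreLocalization.mul_cancel
  injective := numeratorHom_inj fun _ ⟨n, hn⟩ =>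
    hn ▸ isLeftRegular_iff_right_eq_zero_of_mul.mp (hreg.pow n).left

open OreLocalization in
/-- Nagata's lemma, part (iii): if the localisation `A_x` of `A` at the powers of a
nonzero non-unit normal element `x` generating a completely prime ideal is a noetherian
UFD, then so is `A`. -/
theorem nagata_part_iii {A : Type*} [Ring A]
    (hNoeth : IsNoetherianRing A) (hPrime : IsPrimeRing A)
    (x : A) (hx0 : x ≠ 0) (hxu : ¬ IsUnit x) (hxn : IsNormalElem x)
    (hxcp : (TwoSidedIdeal.span {x}).IsCompletelyPrime)
    [OreSet (Submonoid.powers x)]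
    (hloc : IsNoethUFD (A[(Submonoid.powers x)⁻¹])) :
    IsNoethUFD A := by
  obtain ⟨⟨-, -, hUFR⟩, hdom, hH1⟩ := hloc
  have hf := isLeftLocalizationAway_numeratorRingHom (hPrime.isRegular_of_isNormalElem hxn hx0)
  have : IsDomain A := hf.injective.isDomain
  refine ⟨⟨hPrime, hNoeth, fun P hP hP0 => ?_⟩, this, fun P hP => ?_⟩
  · exact hf.exists_principal_prime_le hx0 hxu hxn hxcp hUFR hP hP0
  · exact hf.isCompletelyPrime_of_isHeightOnePrime hx0 hxn hxcp hH1 hP
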